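/- Let d ≥ 2 and let λ₁, …, λ_{d²−1} be d×d complex matrices that are Hermitian, traceless, and satisfy Tr(λ_i·λ_j) = d·δ_{ij} for all i,j. Then for every U in the special unitary group SU(d) there exists Q in the special orthogonal group SO(d²−1) such that for every Hermitian d×d matrix ρ, Tr(UρU†·λ_i) = Σ_j Q_{ij} Tr(ρ·λ_j) for all i. -/

import Mathlib

/-!
Conjugation `M ↦ U† M U` by a unitary `U` preserves the trace pairing `(A, B) ↦ tr (A B)`, fixes
`1`, and maps traceless Hermitian matrices to traceless Hermitian matrices. Since `λ ∪ {1}` is an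
orthogonal basis for this pairing, the matrix of the conjugation in that basis is `Qᵀ ⊕ 1`, where
`Q i j = tr (U† λ_i U λ_j) / d` is real and orthogonal. The determinant of the conjugation is
`det U† ^ d * det U ^ d = 1`, hence `det Q = 1`.
-/

open Matrix Complex
open scoped Kronecker

def IsSU (d : ℕ) (U : Matrix (Fin d) (Fin d) ℂ) : Prop := Uᴴ * U = 1 ∧ U.det = 1

def IsSO (n : ℕ) (Q : Matrix (Fin n) (Fin n) ℝ) : Prop := Qᵀ * Q = 1 ∧ Q.det = 1

theorem Module.Basis.repr_apply_eq_div_of_iIsOrtho {ι K V : Type*} [Fintype ι] [Field K]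
    [AddCommGroup V] [Module K V] (b : Basis ι K V) {B : LinearMap.BilinForm K V}
    (hb : B.iIsOrtho b) {i : ι} (hi : B (b i) (b i) ≠ 0) (x : V) :
    b.repr x i = B x (b i) / B (b i) (b i) := by
  rw [eq_div_iff hi]
  conv_rhs => rw [← b.sum_repr x]
  simp only [LinearMap.map_sum₂, LinearMap.map_smul₂, smul_eq_mul]
  rw [Finset.sum_eq_single i (fun j _ hji => by rw [hb hji, mul_zero]) (by simp)]

theorem LinearMap.det_mulLeft_comp_mulRight {R n : Type*} [CommRing R] [Fintype n]
    [DecidableEq n] (A B : Matrix n n R) :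
    LinearMap.det ((LinearMap.mulLeft R A).comp (LinearMap.mulRight R B)) =
      A.det ^ Fintype.card n * B.det ^ Fintype.card n := by
  let b := Matrix.stdBasis R n n
  have : (LinearMap.mulLeft R A).comp (LinearMap.mulRight R B) = toLin b b (A ⊗ₖ Bᵀ) := by
    refine b.ext fun ⟨p, q⟩ => ?_
    rw [toLin_self, Fintype.sum_prod_type]
    ext i j
    simp [b, stdBasis_eq_single, Matrix.mul_apply, Matrix.sum_apply, Matrix.single, ite_and,
      mul_comm]
  rw [this, LinearMap.det_toLin, det_kronecker, det_transpose]

namespace Matrix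

theorem trace_conjTranspose_mul_mul {n R : Type*} [Fintype n] [DecidableEq n] [CommRing R]
    [StarRing R] {U : Matrix n n R} (hU : U * Uᴴ = 1) (A : Matrix n n R) :
    (Uᴴ * A * U).trace = A.trace := by
  rw [trace_mul_cycle, hU, Matrix.one_mul]

theorem IsHermitian.ofReal_re_trace_mul {n : Type*} [Fintype n] {A B : Matrix n n ℂ}
    (hA : A.IsHermitian) (hB : B.IsHermitian) : (((A * B).trace.re : ℝ) : ℂ) = (A * B).trace := by
  rw [← Complex.conj_eq_iff_re, ← star_def, ← trace_conjTranspose, conjTranspose_mul, hA.eq,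
    hB.eq, trace_mul_comm]

section TracelessOrthogonal

variable {n ι K : Type*} [Fintype n] [Field K]

variable (n K) in
def traceMulForm : LinearMap.BilinForm K (Matrix n n K) :=
  (LinearMap.mul K (Matrix n n K)).compr₂ (traceLinearMap n K K)

@[simp]
theorem traceMulForm_apply (A B : Matrix n n K) : traceMulForm n K A B = (A * B).trace := rfl

structure IsTracelessOrthogonal [DecidableEq ι] (lam : ι → Matrix n n K) : Prop where
  trace_eq_zero : ∀ i, (lam i).trace = 0
  trace_mul : ∀ i j, (lam i * lam j).trace = if i = j then (Fintype.card n : K) else 0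

variable [DecidableEq n]

def withOne (lam : ι → Matrix n n K) : ι ⊕ Unit → Matrix n n K :=
  Sum.elim lam fun _ => 1

variable [DecidableEq ι] {lam : ι → Matrix n n K}

namespace IsTracelessOrthogonal

theorem iIsOrtho_withOne (hlam : IsTracelessOrthogonal lam) :
    (traceMulForm n K).iIsOrtho (withOne lam) := by
  rw [LinearMap.BilinForm.iIsOrtho_def]
  rintro (i | _) (j | _) hij <;> simp_all [withOne, hlam.trace_mul, hlam.trace_eq_zero]

theorem traceMulForm_withOne_self (hlam : IsTracelessOrthogonal lam) (a : ι ⊕ Unit) :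
    traceMulForm n K (withOne lam a) (withOne lam a) = Fintype.card n := by
  rcases a with i | _ <;> simp [withOne, hlam.trace_mul]

variable [Fintype ι] (hlam : IsTracelessOrthogonal lam) (hn : (Fintype.card n : K) ≠ 0)
  (hcard : Fintype.card ι + 1 = Fintype.card n ^ 2)

noncomputable def basis : Module.Basis (ι ⊕ Unit) K (Matrix n n K) :=
  basisOfLinearIndependentOfCardEqFinrank
    (LinearMap.BilinForm.linearIndependent_of_iIsOrtho hlam.iIsOrtho_withOne
      fun a => by rwa [hlam.traceMulForm_withOne_self])
    (by simp [Module.finrank_matrix, hcard, sq])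

@[simp]
theorem coe_basis : ⇑(hlam.basis hn hcard) = withOne lam :=
  coe_basisOfLinearIndependentOfCardEqFinrank ..

theorem basis_repr_apply (M : Matrix n n K) (a : ι ⊕ Unit) :
    (hlam.basis hn hcard).repr M a = (M * withOne lam a).trace / Fintype.card n := by
  rw [Module.Basis.repr_apply_eq_div_of_iIsOrtho _ (by simpa using hlam.iIsOrtho_withOne)
    (by simpa [hlam.traceMulForm_withOne_self] using hn)]
  simp [hlam.traceMulForm_withOne_self]

include hlam hn hcard

theorem eq_sum_of_trace_eq_zero {M : Matrix n n K} (hM : M.trace = 0) :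
    M = ∑ j, ((M * lam j).trace / Fintype.card n) • lam j := by
  conv_lhs => rw [← (hlam.basis hn hcard).sum_repr M]
  simp [Fintype.sum_sum_type, hlam.basis_repr_apply, withOne, hM]

theorem det_eq_det_of_map_one (f : Matrix n n K →ₗ[K] Matrix n n K) (hf_one : f 1 = 1)
    (hf_trace : ∀ j, (f (lam j)).trace = 0) :
    LinearMap.det f = (of fun j k => (f (lam j) * lam k).trace / Fintype.card n).det := by
  rw [← LinearMap.det_toMatrix (hlam.basis hn hcard), ← det_transpose]
  have : (LinearMap.toMatrix (hlam.basis hn hcard) (hlam.basis hn hcard) f)ᵀ =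
      fromBlocks (of fun j k => (f (lam j) * lam k).trace / Fintype.card n) 0 0 1 := by
    ext (j | _) (k | _) <;>
      simp [LinearMap.toMatrix_apply, hlam.basis_repr_apply, withOne, hf_one, hf_trace, hn,
        hlam.trace_eq_zero]
  rw [this, det_fromBlocks_zero₂₁, det_one, mul_one]

end IsTracelessOrthogonal

end TracelessOrthogonal

section Bloch

variable {n ι : Type*} [Fintype n] {lam : ι → Matrix n n ℂ} {U : Matrix n n ℂ}

noncomputable def blochMatrix (lam : ι → Matrix n n ℂ) (U : Matrix n n ℂ) : Matrix ι ι ℝ :=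
  of fun i j => (Uᴴ * lam i * U * lam j).trace.re / Fintype.card n

theorem ofReal_blochMatrix (hherm : ∀ i, (lam i).IsHermitian) (i j : ι) :
    (blochMatrix lam U i j : ℂ) = (Uᴴ * lam i * U * lam j).trace / Fintype.card n := by
  rw [blochMatrix, of_apply, ofReal_div, ofReal_natCast,
    (isHermitian_conjTranspose_mul_mul U (hherm i)).ofReal_re_trace_mul (hherm j)]

theorem trace_conj_mul_eq_blochMatrix_mul_card (hherm : ∀ i, (lam i).IsHermitian)
    (hn : (Fintype.card n : ℂ) ≠ 0) (i j : ι) :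
    (Uᴴ * lam i * U * lam j).trace = blochMatrix lam U i j * Fintype.card n := by
  rw [ofReal_blochMatrix hherm, div_mul_cancel₀ _ hn]

variable [DecidableEq n] [Fintype ι] [DecidableEq ι] (hherm : ∀ i, (lam i).IsHermitian)
  (hlam : IsTracelessOrthogonal lam) (hn : (Fintype.card n : ℂ) ≠ 0)
  (hcard : Fintype.card ι + 1 = Fintype.card n ^ 2) (hU : U * Uᴴ = 1)
include hherm hlam hn hcard hU

theorem conj_eq_sum_blochMatrix_smul (i : ι) :
    Uᴴ * lam i * U = ∑ j, (blochMatrix lam U i j : ℂ) • lam j := by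
  have htrace : (Uᴴ * lam i * U).trace = 0 := by
    rw [trace_conjTranspose_mul_mul hU, hlam.trace_eq_zero]
  simpa only [ofReal_blochMatrix hherm] using hlam.eq_sum_of_trace_eq_zero hn hcard htrace

theorem trace_conj_mul_eq_sum_blochMatrix_mul (ρ : Matrix n n ℂ) (i : ι) :
    (U * ρ * Uᴴ * lam i).trace = ∑ j, (blochMatrix lam U i j : ℂ) * (ρ * lam j).trace := by
  calc (U * ρ * Uᴴ * lam i).trace = (ρ * (Uᴴ * lam i * U)).trace := by
        simp only [Matrix.mul_assoc]; rw [trace_mul_comm U]; simp only [Matrix.mul_assoc]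
    _ = _ := by
        rw [conj_eq_sum_blochMatrix_smul hherm hlam hn hcard hU i]
        simp [Matrix.mul_sum, trace_sum]

theorem blochMatrix_mul_transpose : blochMatrix lam U * (blochMatrix lam U)ᵀ = 1 := by
  ext i m
  have htrace : (Uᴴ * lam i * U * (Uᴴ * lam m * U)).trace = (lam i * lam m).trace := by
    rw [← trace_conjTranspose_mul_mul hU (lam i * lam m)]
    simp only [Matrix.mul_assoc, ← Matrix.mul_assoc U Uᴴ, hU, Matrix.one_mul]
  rw [conj_eq_sum_blochMatrix_smul hherm hlam hn hcard hU m, hlam.trace_mul, Matrix.mul_sum,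
    trace_sum] at htrace
  simp only [Matrix.mul_smul, trace_smul, trace_conj_mul_eq_blochMatrix_mul_card hherm hn,
    smul_eq_mul] at htrace
  rw [mul_apply, one_apply]
  refine ofReal_injective (mul_right_cancel₀ hn ?_)
  push_cast [transpose_apply, apply_ite ofReal]
  rw [ite_mul, one_mul, zero_mul, ← htrace, Finset.sum_mul]
  exact Finset.sum_congr rfl fun j _ => by ring

theorem det_blochMatrix : (blochMatrix lam U).det = 1 := by
  let f := (LinearMap.mulLeft ℂ Uᴴ).comp (LinearMap.mulRight ℂ U)
  have hf (M : Matrix n n ℂ) : f M = Uᴴ * M * U := (Matrix.mul_assoc ..).symm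
  have hdet_f : LinearMap.det f = 1 := by
    rw [LinearMap.det_mulLeft_comp_mulRight, ← mul_pow, ← det_mul, mul_eq_one_comm.mp hU, det_one,
      one_pow]
  rw [hlam.det_eq_det_of_map_one hn hcard f (by simp [hf, mul_eq_one_comm.mp hU])
    (fun j => by rw [hf, trace_conjTranspose_mul_mul hU, hlam.trace_eq_zero])] at hdet_f
  have : (of fun j k => (f (lam j) * lam k).trace / Fintype.card n) =
      ofRealHom.mapMatrix (blochMatrix lam U) := by
    ext j k
    simp [hf, ofReal_blochMatrix hherm]
  rw [this, ← RingHom.map_det] at hdet_f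
  exact ofReal_eq_one.mp hdet_f

end Bloch

end Matrix

theorem sud_induces_so_on_bloch (d : ℕ) (hd : 2 ≤ d)
    (lam : Fin (d ^ 2 - 1) → Matrix (Fin d) (Fin d) ℂ)
    (hherm : ∀ i, (lam i).IsHermitian)
    (htrless : ∀ i, (lam i).trace = 0)
    (horth : ∀ i j, ((lam i) * (lam j)).trace = if i = j then (d : ℂ) else 0)
    (U : Matrix (Fin d) (Fin d) ℂ) (hU : IsSU d U) :
    ∃ Q : Matrix (Fin (d ^ 2 - 1)) (Fin (d ^ 2 - 1)) ℝ, IsSO (d ^ 2 - 1) Q ∧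
      ∀ ρ : Matrix (Fin d) (Fin d) ℂ, ρ.IsHermitian →
        ∀ i, ((U * ρ * Uᴴ * lam i).trace).re =
          ∑ j, Q i j * ((ρ * lam j).trace).re := by
  have hlam : IsTracelessOrthogonal lam := ⟨htrless, by simpa using horth⟩
  have hn : (Fintype.card (Fin d) : ℂ) ≠ 0 := by rw [Fintype.card_fin, Nat.cast_ne_zero]; omega
  have hcard : Fintype.card (Fin (d ^ 2 - 1)) + 1 = Fintype.card (Fin d) ^ 2 := by
    simp [Nat.sub_add_cancel (Nat.one_le_pow _ _ (by omega : 0 < d))]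
  have hUU : U * Uᴴ = 1 := mul_eq_one_comm.mp hU.1
  refine ⟨blochMatrix lam U,
    ⟨mul_eq_one_comm.mp (blochMatrix_mul_transpose hherm hlam hn hcard hUU),
      det_blochMatrix hherm hlam hn hcard hUU⟩, fun ρ _ i => ?_⟩
  rw [trace_conj_mul_eq_sum_blochMatrix_mul hherm hlam hn hcard hUU, re_sum]
  simp only [re_ofReal_mul]
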